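/- Let k = k(n) be a sequence of positive integers with k = o(n). Conditionally on the event that M_{n,p} contains at least k occurrences of the patterns P1 and P2 (counted together), the supremum over all algorithms A of the conditional probability that A solves M_{n,p} is at most 2^{-k} + o(1) as n → ∞. -/

import Mathlib

open scoped Classical

namespace Minesweeper

/-- The possible values of a cell in a grid state. -/
inductive CellState where
  | hidden : CellState
  | clue : Fin 9 → CellState
  | flag : CellState
  | mine : CellState
deriving DecidableEq

/-- The neighborhood of a cell: the cell itself together with all cells at
ℓ∞-distance 1 from it. -/
def nbhd {a b : ℕ} (c : Fin a × Fin b) : Finset (Fin a × Fin b) :=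
  Finset.univ.filter (fun c' =>
    ((c.1 : ℤ) - (c'.1 : ℤ)).natAbs ≤ 1 ∧ ((c.2 : ℤ) - (c'.2 : ℤ)).natAbs ≤ 1)

/-- The number of mines of `M` in the neighborhood of `c`. -/
def mineCount {a b : ℕ} (M : Fin a × Fin b → Bool) (c : Fin a × Fin b) : ℕ :=
  ((nbhd c).filter (fun c' => M c' = true)).card

/-- The total number of mines of a mine assignment. -/
def numMines {a b : ℕ} (M : Fin a × Fin b → Bool) : ℕ :=
  (Finset.univ.filter (fun c => M c = true)).card

/-- A mine assignment `M` and a grid state `S` are consistent. -/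
def Consistent {a b : ℕ} (M : Fin a × Fin b → Bool) (S : Fin a × Fin b → CellState) : Prop :=
  ∀ c, S c = CellState.hidden
    ∨ (∃ k : Fin 9, S c = CellState.clue k ∧ (k : ℕ) = mineCount M c)
    ∨ ((S c = CellState.flag ∨ S c = CellState.mine) ∧ M c = true)

/-- An algorithm assigns to every grid state having a hidden cell one of its hidden cells. -/
structure Algorithm (a b : ℕ) where
  move : (Fin a × Fin b → CellState) → Fin a × Fin b
  move_hidden : ∀ S : Fin a × Fin b → CellState,
    (∃ c, S c = CellState.hidden) → S (move S) = CellState.hidden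

/-- Revealing the cell `c0`. -/
def reveal {a b : ℕ} (M : Fin a × Fin b → Bool) (S : Fin a × Fin b → CellState)
    (c0 : Fin a × Fin b) : Fin a × Fin b → CellState :=
  fun c => if c = c0 then
    (if M c0 = true then CellState.mine
      else CellState.clue ⟨mineCount M c0 % 9, Nat.mod_lt _ (by norm_num)⟩)
    else S c

/-- The sequence of grid states obtained by running the algorithm `A` against the
mine assignment `M`, starting from the all-hidden state. -/
def gameState {a b : ℕ} (A : Algorithm a b) (M : Fin a × Fin b → Bool) :
    ℕ → (Fin a × Fin b → CellState)
  | 0 => fun _ => CellState.hidden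
  | t + 1 => reveal M (gameState A M t) (A.move (gameState A M t))

/-- The algorithm `A` solves the mine assignment `M`. -/
def Solves {a b : ℕ} (A : Algorithm a b) (M : Fin a × Fin b → Bool) : Prop :=
  ∃ t : ℕ, (∀ c, gameState A M t c ≠ CellState.mine) ∧
    (∀ c, gameState A M t c = CellState.hidden → M c = true)

/-- The probability of the event `E` under the random mine assignment on the `a × b` grid
in which each cell independently carries a mine with probability `p`. -/
noncomputable def mineProb (a b : ℕ) (p : ℝ) (E : Set (Fin a × Fin b → Bool)) : ℝ :=
  ∑ M : Fin a × Fin b → Bool,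
    if M ∈ E then (∏ c : Fin a × Fin b, if M c = true then p else 1 - p) else 0

/-- The probability of the event `E` under the random mine assignment `M₀_p` that agrees
with `M₀` on the mines of `M₀` and puts a mine on each empty cell of `M₀` independently
with probability `p`. -/
noncomputable def mineProbAbove (a b : ℕ) (p : ℝ) (M₀ : Fin a × Fin b → Bool)
    (E : Set (Fin a × Fin b → Bool)) : ℝ :=
  ∑ M : Fin a × Fin b → Bool,
    if M ∈ E then
      (∏ c : Fin a × Fin b,
        if M₀ c = true then (if M c = true then (1 : ℝ) else 0)
        else (if M c = true then p else 1 - p))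
    else 0

/-- A pattern: no mines in the first/last two rows and columns, at least one mine in
the third and third-to-last rows and columns. -/
def IsPattern {h w : ℕ} (P : Fin h × Fin w → Bool) : Prop :=
  (∀ c, P c = true → 2 ≤ (c.1 : ℕ) ∧ (c.1 : ℕ) + 3 ≤ h ∧ 2 ≤ (c.2 : ℕ) ∧ (c.2 : ℕ) + 3 ≤ w)
  ∧ (∃ c, P c = true ∧ (c.1 : ℕ) = 2) ∧ (∃ c, P c = true ∧ (c.1 : ℕ) + 3 = h)
  ∧ (∃ c, P c = true ∧ (c.2 : ℕ) = 2) ∧ (∃ c, P c = true ∧ (c.2 : ℕ) + 3 = w)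

/-- An ambiguous grid state. -/
def AmbiguousState {a b : ℕ} (S : Fin a × Fin b → CellState) : Prop :=
  (∃ c, S c = CellState.hidden) ∧ (∀ c, S c ≠ CellState.mine) ∧
  ∀ c, S c = CellState.hidden →
    ∃ P P' : Fin a × Fin b → Bool, IsPattern P ∧ IsPattern P' ∧
      Consistent P S ∧ Consistent P' S ∧ P c = true ∧ P' c = false

/-- An ambiguous pattern: a pattern consistent with some ambiguous grid state. -/
def AmbiguousPattern {a b : ℕ} (P : Fin a × Fin b → Bool) : Prop :=
  IsPattern P ∧ ∃ S : Fin a × Fin b → CellState, AmbiguousState S ∧ Consistent P S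

/-- The pattern `P1` (rows and columns numbered from 0 to 7 here). -/
def P1 : Fin 8 × Fin 8 → Bool := fun c =>
  decide (((c.1 : ℕ), (c.2 : ℕ)) ∈ [(2,2),(2,5),(5,2),(5,5),(3,3),(4,4)])

/-- The pattern `P2` (rows and columns numbered from 0 to 7 here). -/
def P2 : Fin 8 × Fin 8 → Bool := fun c =>
  decide (((c.1 : ℕ), (c.2 : ℕ)) ∈ [(2,2),(2,5),(5,2),(5,5),(3,4),(4,3)])

/-- `M` contains an occurrence of the pattern `P` at offset `(r, s)`. -/
def ContainsAt {a b h w : ℕ} (M : Fin a × Fin b → Bool) (P : Fin h × Fin w → Bool)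
    (r s : ℕ) : Prop :=
  ∃ (hr : r + h ≤ a) (hs : s + w ≤ b),
    ∀ (i : Fin h) (j : Fin w), M (⟨r + i, by omega⟩, ⟨s + j, by omega⟩) = P (i, j)

/-- `M` contains an occurrence of the pattern `P`. -/
def Contains {a b h w : ℕ} (M : Fin a × Fin b → Bool) (P : Fin h × Fin w → Bool) : Prop :=
  ∃ r s, ContainsAt M P r s

/-- The number of occurrences of the pattern `P` in `M`. -/
noncomputable def numOcc {a b h w : ℕ} (M : Fin a × Fin b → Bool)
    (P : Fin h × Fin w → Bool) : ℕ :=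
  ((Finset.range a ×ˢ Finset.range b).filter (fun rs => ContainsAt M P rs.1 rs.2)).card

/-- The envelope of a grid state: the union of the neighborhoods of its hidden cells. -/
noncomputable def envelope {a b : ℕ} (S : Fin a × Fin b → CellState) :
    Finset (Fin a × Fin b) :=
  Finset.univ.filter (fun c => ∃ c', S c' = CellState.hidden ∧ c ∈ nbhd c')

/-- The number of flags of `S` in the neighborhood of `c`. -/
def flagCount {a b : ℕ} (S : Fin a × Fin b → CellState) (c : Fin a × Fin b) : ℕ :=
  ((nbhd c).filter (fun c' => S c' = CellState.flag)).card

/-- The number of hidden cells of `S` in the neighborhood of `c`. -/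
def hiddenCount {a b : ℕ} (S : Fin a × Fin b → CellState) (c : Fin a × Fin b) : ℕ :=
  ((nbhd c).filter (fun c' => S c' = CellState.hidden)).card

/-- A border cell of the envelope of `S`. -/
noncomputable def IsBorderCell {a b : ℕ} (S : Fin a × Fin b → CellState)
    (c : Fin a × Fin b) : Prop :=
  c ∈ envelope S ∧ ((nbhd c).filter (fun c' => c' ∈ envelope S)).card < 9

/-- The orthogonal (horizontal/vertical) neighbors of a cell. -/
def orthNbrs {a b : ℕ} (c : Fin a × Fin b) : Finset (Fin a × Fin b) :=
  (nbhd c).filter (fun c' => c' ≠ c ∧ (c'.1 = c.1 ∨ c'.2 = c.2))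

/-- A corner cell of the envelope of `S`: a border cell at least two of whose orthogonal
neighbors lie outside the envelope. -/
noncomputable def IsCornerCell {a b : ℕ} (S : Fin a × Fin b → CellState)
    (c : Fin a × Fin b) : Prop :=
  IsBorderCell S c ∧ 2 ≤ ((orthNbrs c).filter (fun c' => c' ∉ envelope S)).card

/-- The number of mines of `M` in the `100 × 100` subgrid with upper-left offset `(r, s)`. -/
def subgridMineCount {a b : ℕ} (M : Fin a × Fin b → Bool) (r s : ℕ) : ℕ :=
  (Finset.univ.filter (fun c : Fin a × Fin b =>
    M c = true ∧ r ≤ (c.1 : ℕ) ∧ (c.1 : ℕ) < r + 100 ∧ s ≤ (c.2 : ℕ) ∧ (c.2 : ℕ) < s + 100)).card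

/-- The cells revealed when starting from the upper-left corner and iteratively revealing
every cell in the neighborhood of a revealed cell with value 0. -/
inductive Revealed {a b : ℕ} (M : Fin a × Fin b → Bool) : Fin a × Fin b → Prop where
  | corner (c : Fin a × Fin b) : (c.1 : ℕ) = 0 → (c.2 : ℕ) = 0 → Revealed M c
  | step (c c' : Fin a × Fin b) : Revealed M c → M c = false → mineCount M c = 0 →
      c' ∈ nbhd c → Revealed M c'

/-- A cell whose value in the auto-revealed grid state `S_{n,p}` is not the clue 0. -/
def NonzeroCell {a b : ℕ} (M : Fin a × Fin b → Bool) (c : Fin a × Fin b) : Prop :=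
  ¬(Revealed M c ∧ M c = false ∧ mineCount M c = 0)

/-- Two cells lie in the same island of the auto-revealed grid state `S_{n,p}`:
they are joined by a path of non-zero cells, consecutive ones at ℓ∞-distance 1. -/
def SameIsland {a b : ℕ} (M : Fin a × Fin b → Bool) (c c' : Fin a × Fin b) : Prop :=
  Relation.ReflTransGen
    (fun x y => NonzeroCell M x ∧ NonzeroCell M y ∧ x ≠ y ∧ y ∈ nbhd x) c c'

/-- The mine assignment at time `t` of the random mine process encoded by the
bijection `f` (the mine added at time `i + 1` is at cell `f i`). -/
def procAssign {a b : ℕ} (f : Fin (a * b) → Fin a × Fin b) (t : ℕ) :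
    Fin a × Fin b → Bool :=
  fun c => decide (∃ i : Fin (a * b), (i : ℕ) < t ∧ f i = c)

/-- The probability of the event `E` for the random mine process, realized as a uniformly
random bijective ordering of the cells of the grid. -/
noncomputable def procProb (a b : ℕ) (E : Set (Fin (a * b) → Fin a × Fin b)) : ℝ :=
  ((Finset.univ.filter
      (fun f : Fin (a * b) → Fin a × Fin b => Function.Bijective f ∧ f ∈ E)).card : ℝ) /
  ((Finset.univ.filter
      (fun f : Fin (a * b) → Fin a × Fin b => Function.Bijective f)).card : ℝ)

/-- The hitting time `τ`: the first time `t` at which the process contains an occurrence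
of `P1` or `P2` (`⊤` if there is no such time). -/
noncomputable def tauProc {a b : ℕ} (f : Fin (a * b) → Fin a × Fin b) : ℕ∞ :=
  sInf ((fun t : ℕ => (t : ℕ∞)) ''
    {t | Contains (procAssign f t) P1 ∨ Contains (procAssign f t) P2})

/-!
Flipping the 2×2 centre of an occurrence turns `P1` into `P2` and vice versa; it keeps the
number of mines and changes no clue outside the centre, and distinct occurrences are too far
apart for their flips to interfere. Two assignments that differ by flipping a nonempty set of
centres cannot both be solved by one algorithm: the runs agree until the algorithm opens a
flipped cell, which is a mine in one of the two. Hence every solved assignment with at least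
`k` occurrences yields `2 ^ k` assignments of the same probability and with the same
occurrences, the families for distinct solved assignments are disjoint, and the conditional
probability of solving is at most `2 ^ (-k)`.
-/

section Game

variable {a b : ℕ} {A : Algorithm a b} {M M' : Fin a × Fin b → Bool}

def revealedValue (M : Fin a × Fin b → Bool) (c : Fin a × Fin b) : CellState :=
  if M c = true then CellState.mine
  else CellState.clue ⟨mineCount M c % 9, Nat.mod_lt _ (by norm_num)⟩

lemma revealedValue_eq_mine_iff {c : Fin a × Fin b} :
    revealedValue M c = CellState.mine ↔ M c = true := by
  unfold revealedValue; split <;> simp_all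

lemma revealedValue_ne_hidden {c : Fin a × Fin b} : revealedValue M c ≠ CellState.hidden := by
  unfold revealedValue; split <;> simp

lemma revealedValue_congr {c : Fin a × Fin b} (h : M c = M' c)
    (hclue : M c = false → mineCount M c = mineCount M' c) :
    revealedValue M c = revealedValue M' c := by
  cases hc : M c <;> simp_all [revealedValue]

lemma gameState_succ (t : ℕ) :
    gameState A M (t + 1) = Function.update (gameState A M t) (A.move (gameState A M t))
      (revealedValue M (A.move (gameState A M t))) := by
  funext c
  simp only [gameState, reveal, Function.update_apply, revealedValue]

lemma gameState_eq_revealedValue {t : ℕ} {c : Fin a × Fin b}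
    (hc : gameState A M t c ≠ CellState.hidden) : gameState A M t c = revealedValue M c := by
  induction t with
  | zero => exact absurd rfl hc
  | succ t ih =>
    rw [gameState_succ, Function.update_apply] at hc ⊢
    split_ifs at hc ⊢ with h
    · rw [h]
    · exact ih hc

lemma gameState_ne_hidden_of_le {t t' : ℕ} (htt' : t ≤ t') {c : Fin a × Fin b}
    (hc : gameState A M t c ≠ CellState.hidden) : gameState A M t' c ≠ CellState.hidden := by
  induction t', htt' using Nat.le_induction with
  | base => exact hc
  | succ t' _ ih =>
    rw [gameState_succ, Function.update_apply]
    split_ifs with h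
    · exact revealedValue_ne_hidden
    · exact ih

lemma eq_of_gameState_eq {t : ℕ} (h : gameState A M t = gameState A M' t) {c : Fin a × Fin b}
    (hc : gameState A M t c ≠ CellState.hidden) : M c = M' c := by
  have hc' : gameState A M' t c ≠ CellState.hidden := h ▸ hc
  have hv := (gameState_eq_revealedValue hc).symm.trans (h ▸ gameState_eq_revealedValue hc')
  rw [Bool.eq_iff_iff, ← revealedValue_eq_mine_iff, ← revealedValue_eq_mine_iff (M := M'), hv]

lemma gameState_ne_of_forall_hidden_mine {t : ℕ}
    (hhid : ∀ c, gameState A M t c = CellState.hidden → M c = true)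
    (h₁ : ∃ c, M c = false ∧ M' c = true) : gameState A M t ≠ gameState A M' t := by
  obtain ⟨c, hMc, hM'c⟩ := h₁
  intro h
  have hc : gameState A M t c ≠ CellState.hidden := fun hc => Bool.false_ne_true (hMc ▸ hhid c hc)
  simpa [hMc, hM'c] using eq_of_gameState_eq h hc

lemma not_solves_of_move_mine {t₀ : ℕ} (h₁ : ∃ c, M c = false ∧ M' c = true)
    (hagree : ∀ u ≤ t₀, gameState A M u = gameState A M' u)
    (hmine : M (A.move (gameState A M t₀)) = true) : ¬Solves A M := by
  rintro ⟨t, hnomine, hhid⟩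
  rcases le_or_gt t t₀ with ht | ht
  · exact gameState_ne_of_forall_hidden_mine hhid h₁ (hagree t ht)
  · set m := A.move (gameState A M t₀)
    have hm : gameState A M (t₀ + 1) m ≠ CellState.hidden := by
      simp [gameState_succ, m, revealedValue, hmine]
    apply hnomine m
    rw [gameState_eq_revealedValue (gameState_ne_hidden_of_le ht hm), revealedValue_eq_mine_iff]
    exact hmine

/-- At the first move where the two runs part, the revealed cell is a mine for one of the
assignments; that run cannot have finished before, since it still agreed with the other one. -/
theorem not_solves_and_solves
    (hclue : ∀ c, M c = false → M' c = false → mineCount M c = mineCount M' c)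
    (h₁ : ∃ c, M c = false ∧ M' c = true) (h₂ : ∃ c, M' c = false ∧ M c = true) :
    ¬(Solves A M ∧ Solves A M') := by
  classical
  rintro ⟨hM, hM'⟩
  have hne : ∃ t, gameState A M t ≠ gameState A M' t := by
    obtain ⟨t, -, hhid⟩ := hM
    exact ⟨t, gameState_ne_of_forall_hidden_mine hhid h₁⟩
  obtain ⟨t₀, ht₀⟩ : ∃ t₀, Nat.find hne = t₀ + 1 :=
    Nat.exists_eq_succ_of_ne_zero fun h => Nat.find_spec hne (by rw [h]; rfl)
  have hagree : ∀ u ≤ t₀, gameState A M u = gameState A M' u :=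
    fun u hu => not_not.1 (Nat.find_min hne (by omega))
  set m := A.move (gameState A M t₀) with hm
  have hm' : A.move (gameState A M' t₀) = m := by rw [← hagree t₀ le_rfl]
  have hmm : M m ≠ M' m := by
    intro h
    apply Nat.find_spec hne
    rw [ht₀, gameState_succ, gameState_succ, hm', ← hm, hagree t₀ le_rfl,
      revealedValue_congr h fun hf => hclue m hf (h ▸ hf)]
  cases hMm : M m
  · have hM'm : M' m = true := by simpa [hMm] using hmm
    exact not_solves_of_move_mine h₂ (fun u hu => (hagree u hu).symm) (hm' ▸ hM'm) hM'
  · exact not_solves_of_move_mine h₁ hagree hMm hM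

end Game

section Windows

variable {a b h w : ℕ} {M : Fin a × Fin b → Bool} {P : Fin h × Fin w → Bool} {r s : ℕ}

lemma mem_nbhd_iff {c x : Fin a × Fin b} : x ∈ nbhd c ↔
    (c.1 : ℕ) ≤ x.1 + 1 ∧ (x.1 : ℕ) ≤ c.1 + 1 ∧ (c.2 : ℕ) ≤ x.2 + 1 ∧ (x.2 : ℕ) ≤ c.2 + 1 := by
  simp only [nbhd, Finset.mem_filter, Finset.mem_univ, true_and]
  omega

def shiftEmb (hr : r + h ≤ a) (hs : s + w ≤ b) : Fin h × Fin w ↪ Fin a × Fin b where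
  toFun ij := (⟨r + ij.1, by omega⟩, ⟨s + ij.2, by omega⟩)
  inj' ij ij' e := by
    simp only [Prod.mk.injEq, Fin.mk.injEq, Nat.add_left_cancel_iff] at e
    exact Prod.ext (Fin.ext e.1) (Fin.ext e.2)

lemma shiftEmb_apply (hr : r + h ≤ a) (hs : s + w ≤ b) (ij : Fin h × Fin w) :
    shiftEmb hr hs ij = (⟨r + ij.1, by omega⟩, ⟨s + ij.2, by omega⟩) :=
  rfl

lemma ContainsAt.bounds (hM : ContainsAt M P r s) : r + h ≤ a ∧ s + w ≤ b :=
  ⟨hM.1, hM.2.1⟩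

lemma ContainsAt.apply (hM : ContainsAt M P r s) {c : Fin a × Fin b} {i : Fin h} {j : Fin w}
    (hi : (c.1 : ℕ) = r + i) (hj : (c.2 : ℕ) = s + j) : M c = P (i, j) := by
  obtain ⟨hr, hs, hP⟩ := hM
  rw [show c = (⟨r + i, by omega⟩, ⟨s + j, by omega⟩) from Prod.ext (Fin.ext hi) (Fin.ext hj)]
  exact hP i j

lemma ContainsAt.apply_shiftEmb (hM : ContainsAt M P r s) (ij : Fin h × Fin w) :
    M (shiftEmb hM.bounds.1 hM.bounds.2 ij) = P ij :=
  hM.apply rfl rfl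

lemma ContainsAt.mineCount_eq (hM : ContainsAt M P r s) {c : Fin a × Fin b} {i j : ℕ}
    (hi : (c.1 : ℕ) = r + i) (hj : (c.2 : ℕ) = s + j) (hi₁ : 1 ≤ i) (hi₂ : i + 2 ≤ h)
    (hj₁ : 1 ≤ j) (hj₂ : j + 2 ≤ w) :
    mineCount M c = mineCount P (⟨i, by omega⟩, ⟨j, by omega⟩) := by
  obtain ⟨hr, hs⟩ := hM.bounds
  symm
  apply Finset.card_nbij (shiftEmb hr hs)
  · intro ij hij
    simp only [Finset.coe_filter, Set.mem_ofPred_eq, mem_nbhd_iff] at hij ⊢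
    refine ⟨?_, hM.apply_shiftEmb ij ▸ hij.2⟩
    simp only [shiftEmb_apply]
    omega
  · exact (shiftEmb hr hs).injective.injOn
  · rintro x hx
    simp only [Finset.coe_filter, Set.mem_ofPred_eq, mem_nbhd_iff] at hx
    refine ⟨(⟨x.1 - r, by omega⟩, ⟨x.2 - s, by omega⟩), ?_, ?_⟩
    · simp only [Finset.coe_filter, Set.mem_ofPred_eq, mem_nbhd_iff]
      refine ⟨by omega, ?_⟩
      rw [← hM.apply (c := x) (by simp only; omega) (by simp only; omega)]
      exact hx.2
    · ext <;> simp only [shiftEmb_apply] <;> omega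

end Windows

def pattern (q : Bool) : Fin 8 × Fin 8 → Bool := cond q P1 P2

lemma pattern_core : ∀ (q : Bool) (c : Fin 8 × Fin 8), pattern q c = true →
    2 ≤ (c.1 : ℕ) ∧ (c.1 : ℕ) ≤ 5 ∧ 2 ≤ (c.2 : ℕ) ∧ (c.2 : ℕ) ≤ 5 := by
  decide

lemma pattern_corners (q : Bool) : pattern q (2, 2) = true ∧ pattern q (2, 5) = true ∧
    pattern q (5, 2) = true ∧ pattern q (5, 5) = true := by
  cases q <;> decide

lemma pattern_centre (q : Bool) : pattern q (3, 3) = q ∧ pattern q (4, 4) = q ∧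
    pattern q (3, 4) = !q ∧ pattern q (4, 3) = !q := by
  cases q <;> decide

lemma pattern_not : ∀ (q : Bool) (c : Fin 8 × Fin 8), pattern (!q) c =
    if 3 ≤ (c.1 : ℕ) ∧ (c.1 : ℕ) ≤ 4 ∧ 3 ≤ (c.2 : ℕ) ∧ (c.2 : ℕ) ≤ 4 then !pattern q c
    else pattern q c := by
  decide

lemma mineCount_pattern_not : ∀ (q : Bool) (c : Fin 8 × Fin 8), pattern q c = false →
    pattern (!q) c = false → mineCount (pattern (!q)) c = mineCount (pattern q) c := by
  decide

lemma card_pattern_not : ∀ q : Bool, (Finset.univ.filter fun c => pattern (!q) c = true).card =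
    (Finset.univ.filter fun c => pattern q c = true).card := by
  decide

section Occurrences

variable {a b : ℕ} {M : Fin a × Fin b → Bool} {q q' : Bool} {r s r' s' : ℕ}

lemma ContainsAt.mem_core (hM : ContainsAt M (pattern q) r s) {c : Fin a × Fin b}
    (h₁ : r ≤ c.1) (h₂ : (c.1 : ℕ) < r + 8) (h₃ : s ≤ c.2) (h₄ : (c.2 : ℕ) < s + 8)
    (hc : M c = true) : r + 2 ≤ c.1 ∧ (c.1 : ℕ) ≤ r + 5 ∧ s + 2 ≤ c.2 ∧ (c.2 : ℕ) ≤ s + 5 := by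
  have := pattern_core q (⟨c.1 - r, by omega⟩, ⟨c.2 - s, by omega⟩)
    ((hM.apply (Nat.add_sub_cancel' h₁).symm (Nat.add_sub_cancel' h₃).symm).symm.trans hc)
  simp only at this
  omega

/-- The corner mines of the second occurrence force the offsets to differ by `0` or `3` in each
coordinate, and its centre mines then exclude `3`. -/
lemma ContainsAt.eq_of_near (hM : ContainsAt M (pattern q) r s)
    (hM' : ContainsAt M (pattern q') r' s') (h₁ : r' ≤ r + 4) (h₂ : r ≤ r' + 4)
    (h₃ : s' ≤ s + 4) (h₄ : s ≤ s' + 4) : r' = r ∧ s' = s := by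
  obtain ⟨hr', hs'⟩ := hM'.bounds
  have core : ∀ i j (hi : i < 8) (hj : j < 8), pattern q' (⟨i, hi⟩, ⟨j, hj⟩) = true →
      r ≤ r' + i → r' + i < r + 8 → s ≤ s' + j → s' + j < s + 8 →
      r + 2 ≤ r' + i ∧ r' + i ≤ r + 5 ∧ s + 2 ≤ s' + j ∧ s' + j ≤ s + 5 :=
    fun i j hi hj hij _ _ _ _ => hM.mem_core (c := (⟨r' + i, by omega⟩, ⟨s' + j, by omega⟩))
      (by omega) (by omega) (by omega) (by omega) ((hM'.apply rfl rfl).trans hij)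
  obtain ⟨c22, c25, c52, c55⟩ := pattern_corners q'
  have k22 := core 2 2 (by norm_num) (by norm_num) c22
  have k25 := core 2 5 (by norm_num) (by norm_num) c25
  have k52 := core 5 2 (by norm_num) (by norm_num) c52
  have k55 := core 5 5 (by norm_num) (by norm_num) c55
  obtain ⟨c33, c44, c34, c43⟩ := pattern_centre q'
  cases q'
  · have k34 := core 3 4 (by norm_num) (by norm_num) c34
    have k43 := core 4 3 (by norm_num) (by norm_num) c43
    omega
  · have k33 := core 3 3 (by norm_num) (by norm_num) c33
    have k44 := core 4 4 (by norm_num) (by norm_num) c44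
    omega

lemma ContainsAt.eq_of_pattern (hM : ContainsAt M (pattern q) r s)
    (hM' : ContainsAt M (pattern q') r s) : q = q' := by
  obtain ⟨hr, hs⟩ := hM.bounds
  let c : Fin a × Fin b := (⟨r + 3, by omega⟩, ⟨s + 3, by omega⟩)
  have := (hM.apply (c := c) (i := 3) (j := 3) rfl rfl).symm.trans
    (hM'.apply (i := 3) (j := 3) rfl rfl)
  rwa [(pattern_centre q).1, (pattern_centre q').1] at this

noncomputable def occurrences (M : Fin a × Fin b → Bool) : Finset (ℕ × ℕ) :=
  (Finset.range a ×ˢ Finset.range b).filter fun o => ∃ q, ContainsAt M (pattern q) o.1 o.2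

lemma mem_occurrences {o : ℕ × ℕ} :
    o ∈ occurrences M ↔ ∃ q, ContainsAt M (pattern q) o.1 o.2 := by
  simp only [occurrences, Finset.mem_filter, Finset.mem_product, Finset.mem_range,
    and_iff_right_iff_imp]
  rintro ⟨q, hq⟩
  have := hq.bounds
  omega

lemma numOcc_add_numOcc : numOcc M P1 + numOcc M P2 = (occurrences M).card := by
  rw [numOcc, numOcc, ← Finset.card_union_of_disjoint]
  · congr 1
    ext o
    simp only [occurrences, Finset.mem_union, Finset.mem_filter, Bool.exists_bool]
    unfold pattern
    tauto
  · exact Finset.disjoint_filter.2 fun o _ h₁ h₂ =>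
      Bool.noConfusion (ContainsAt.eq_of_pattern (q := true) (q' := false) h₁ h₂)

end Occurrences

section Flips

variable {a b : ℕ} {M : Fin a × Fin b → Bool} {q : Bool} {r s : ℕ} {t u : Finset (ℕ × ℕ)}

def InCentre (o : ℕ × ℕ) (c : Fin a × Fin b) : Prop :=
  o.1 + 3 ≤ c.1 ∧ (c.1 : ℕ) ≤ o.1 + 4 ∧ o.2 + 3 ≤ c.2 ∧ (c.2 : ℕ) ≤ o.2 + 4

/-- Flipping the centre of an occurrence of `P1` turns it into one of `P2`, and vice versa. -/
noncomputable def flipCentres (M : Fin a × Fin b → Bool) (t : Finset (ℕ × ℕ)) :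
    Fin a × Fin b → Bool :=
  fun c => if ∃ o ∈ t, InCentre o c then !M c else M c

lemma flipCentres_of_inCentre {o : ℕ × ℕ} (ho : o ∈ t) {c : Fin a × Fin b}
    (hc : InCentre o c) : flipCentres M t c = !M c :=
  if_pos ⟨o, ho, hc⟩

lemma flipCentres_of_not_inCentre {c : Fin a × Fin b} (hc : ∀ o ∈ t, ¬InCentre o c) :
    flipCentres M t c = M c :=
  if_neg fun ⟨o, ho, hoc⟩ => hc o ho hoc

@[simp]
lemma flipCentres_empty : flipCentres M ∅ = M := by
  funext c
  exact flipCentres_of_not_inCentre (by simp)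

@[simp]
lemma flipCentres_flipCentres_self : flipCentres (flipCentres M t) t = M := by
  funext c
  by_cases h : ∃ o ∈ t, InCentre o c <;> simp [flipCentres, h]

lemma eq_of_inCentre {o o' : ℕ × ℕ} (ho : o ∈ occurrences M) (ho' : o' ∈ occurrences M)
    {c : Fin a × Fin b} (hc : InCentre o' c) (h₁ : o.1 ≤ c.1) (h₂ : (c.1 : ℕ) < o.1 + 8)
    (h₃ : o.2 ≤ c.2) (h₄ : (c.2 : ℕ) < o.2 + 8) : o' = o := by
  obtain ⟨q, hq⟩ := mem_occurrences.1 ho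
  obtain ⟨q', hq'⟩ := mem_occurrences.1 ho'
  unfold InCentre at hc
  obtain ⟨e₁, e₂⟩ := hq.eq_of_near hq' (by omega) (by omega) (by omega) (by omega)
  exact Prod.ext e₁ e₂

lemma flipCentres_containsAt (ht : t ⊆ occurrences M) (hM : ContainsAt M (pattern q) r s) :
    ContainsAt (flipCentres M t) (pattern (if (r, s) ∈ t then !q else q)) r s := by
  obtain ⟨hr, hs⟩ := hM.bounds
  refine ⟨hr, hs, fun i j => ?_⟩
  set c : Fin a × Fin b := (⟨r + i, by omega⟩, ⟨s + j, by omega⟩)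
  have hMc : M c = pattern q (i, j) := hM.apply rfl rfl
  have hcentre : InCentre (r, s) c ↔
      3 ≤ (i : ℕ) ∧ (i : ℕ) ≤ 4 ∧ 3 ≤ (j : ℕ) ∧ (j : ℕ) ≤ 4 := by
    simp only [InCentre, c]
    omega
  have hrs : (r, s) ∈ occurrences M := mem_occurrences.2 ⟨q, hM⟩
  by_cases hflip : (r, s) ∈ t ∧ InCentre (r, s) c
  · rw [flipCentres_of_inCentre hflip.1 hflip.2, if_pos hflip.1, pattern_not,
      if_pos (hcentre.1 hflip.2), hMc]
  · have hother : ∀ o ∈ t, ¬InCentre o c := fun o ho hoc => hflip <| by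
      obtain rfl := eq_of_inCentre hrs (ht ho) hoc (by simp [c]) (by simp [c])
        (by simp [c]) (by simp [c])
      exact ⟨ho, hoc⟩
    rw [flipCentres_of_not_inCentre hother, hMc]
    split_ifs with hrst
    · rw [pattern_not, if_neg fun h => hflip ⟨hrst, hcentre.2 h⟩]
    · rfl

lemma occurrences_subset_flipCentres (ht : t ⊆ occurrences M) :
    occurrences M ⊆ occurrences (flipCentres M t) := fun o ho => by
  obtain ⟨q, hq⟩ := mem_occurrences.1 ho
  exact mem_occurrences.2 ⟨_, flipCentres_containsAt ht hq⟩

lemma occurrences_flipCentres (ht : t ⊆ occurrences M) :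
    occurrences (flipCentres M t) = occurrences M := by
  refine subset_antisymm ?_ (occurrences_subset_flipCentres ht)
  have ht' := ht.trans (occurrences_subset_flipCentres ht)
  simpa using occurrences_subset_flipCentres ht'

lemma flipCentres_flipCentres (ht : t ⊆ occurrences M) (hu : u ⊆ occurrences M) :
    flipCentres (flipCentres M t) u = flipCentres M (symmDiff t u) := by
  funext c
  have huniq : ∀ o ∈ t, ∀ o' ∈ u, InCentre o c → InCentre o' c → o' = o :=
    fun o ho o' ho' hoc ho'c => by
      unfold InCentre at hoc
      exact eq_of_inCentre (ht ho) (hu ho') ho'c (by omega) (by omega) (by omega) (by omega)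
  have hsymm : (∃ o ∈ symmDiff t u, InCentre o c) ↔
      ¬((∃ o ∈ t, InCentre o c) ↔ ∃ o ∈ u, InCentre o c) := by
    simp only [Finset.mem_symmDiff]
    constructor
    · rintro ⟨o, ⟨hot, hou⟩ | ⟨hou, hot⟩, hoc⟩ h
      · obtain ⟨o', ho', ho'c⟩ := h.1 ⟨o, hot, hoc⟩
        exact hou (huniq o hot o' ho' hoc ho'c ▸ ho')
      · obtain ⟨o', ho', ho'c⟩ := h.2 ⟨o, hou, hoc⟩
        exact hot ((huniq o' ho' o hou ho'c hoc).symm ▸ ho')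
    · intro h
      by_cases hT : ∃ o ∈ t, InCentre o c
      · obtain ⟨o, ho, hoc⟩ := hT
        exact ⟨o, Or.inl ⟨ho, fun hou => h ⟨fun _ => ⟨o, hou, hoc⟩, fun _ => ⟨o, ho, hoc⟩⟩⟩, hoc⟩
      · obtain ⟨o, ho, hoc⟩ : ∃ o ∈ u, InCentre o c := by tauto
        exact ⟨o, Or.inr ⟨ho, fun hot => hT ⟨o, hot, hoc⟩⟩, hoc⟩
  simp only [flipCentres]
  by_cases hT : ∃ o ∈ t, InCentre o c <;> by_cases hU : ∃ o ∈ u, InCentre o c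
  · rw [if_pos hU, if_pos hT, if_neg fun h => hsymm.1 h (iff_of_true hT hU), Bool.not_not]
  · rw [if_neg hU, if_pos hT, if_pos (hsymm.2 fun h => hU (h.1 hT))]
  · rw [if_pos hU, if_neg hT, if_pos (hsymm.2 fun h => hT (h.2 hU))]
  · rw [if_neg hU, if_neg hT, if_neg fun h => hsymm.1 h (iff_of_false hT hU)]

lemma mineCount_flipCentres (ht : t ⊆ occurrences M) {c : Fin a × Fin b} (hc : M c = false)
    (hc' : flipCentres M t c = false) : mineCount (flipCentres M t) c = mineCount M c := by
  by_cases hnear : ∃ x ∈ nbhd c, ∃ o ∈ t, InCentre o x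
  · obtain ⟨x, hx, o, ho, hox⟩ := hnear
    obtain ⟨q, hq⟩ := mem_occurrences.1 (ht ho)
    have hq' := flipCentres_containsAt ht hq
    rw [if_pos ho] at hq'
    rw [mem_nbhd_iff] at hx
    unfold InCentre at hox
    obtain ⟨hr, hs⟩ := hq.bounds
    have hi : (c.1 : ℕ) = o.1 + (c.1 - o.1 : ℕ) := by omega
    have hj : (c.2 : ℕ) = o.2 + (c.2 - o.2 : ℕ) := by omega
    rw [hq'.mineCount_eq hi hj (by omega) (by omega) (by omega) (by omega),
      hq.mineCount_eq hi hj (by omega) (by omega) (by omega) (by omega)]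
    exact mineCount_pattern_not q _ ((hq.apply hi hj).symm.trans hc)
      ((hq'.apply hi hj).symm.trans hc')
  · unfold mineCount
    congr 1
    refine Finset.filter_congr fun y hy => ?_
    rw [flipCentres_of_not_inCentre fun o ho hoy => hnear ⟨y, hy, o, ho, hoy⟩]

lemma ContainsAt.exists_centre_cells (hM : ContainsAt M (pattern q) r s) :
    ∃ x y, InCentre (r, s) x ∧ InCentre (r, s) y ∧ M x = false ∧ M y = true := by
  obtain ⟨hr, hs⟩ := hM.bounds
  let c₃₃ : Fin a × Fin b := (⟨r + 3, by omega⟩, ⟨s + 3, by omega⟩)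
  let c₃₄ : Fin a × Fin b := (⟨r + 3, by omega⟩, ⟨s + 4, by omega⟩)
  have h₃₃ : M c₃₃ = q := (hM.apply (i := 3) (j := 3) rfl rfl).trans (pattern_centre q).1
  have h₃₄ : M c₃₄ = !q := (hM.apply (i := 3) (j := 4) rfl rfl).trans (pattern_centre q).2.2.1
  have hcen₃₃ : InCentre (r, s) c₃₃ := by simp [InCentre, c₃₃]
  have hcen₃₄ : InCentre (r, s) c₃₄ := by simp [InCentre, c₃₄]
  cases q
  · exact ⟨c₃₃, c₃₄, hcen₃₃, hcen₃₄, h₃₃, h₃₄⟩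
  · exact ⟨c₃₄, c₃₃, hcen₃₄, hcen₃₃, h₃₄, h₃₃⟩

theorem not_solves_and_solves_flipCentres (A : Algorithm a b) (hu : u ⊆ occurrences M)
    (hne : u.Nonempty) : ¬(Solves A M ∧ Solves A (flipCentres M u)) := by
  obtain ⟨o, ho⟩ := hne
  obtain ⟨q, hq⟩ := mem_occurrences.1 (hu ho)
  obtain ⟨x, y, hx, hy, hMx, hMy⟩ := hq.exists_centre_cells
  refine not_solves_and_solves (fun c h h' => (mineCount_flipCentres hu h h').symm)
    ⟨x, hMx, ?_⟩ ⟨y, ?_, hMy⟩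
  · rw [flipCentres_of_inCentre ho hx, hMx]; rfl
  · rw [flipCentres_of_inCentre ho hy, hMy]; rfl

theorem eq_of_flipCentres_eq {A : Algorithm a b} {M' : Fin a × Fin b → Bool}
    {s s' : Finset (ℕ × ℕ)} (hM : Solves A M) (hM' : Solves A M') (hs : s ⊆ occurrences M)
    (hs' : s' ⊆ occurrences M') (h : flipCentres M s = flipCentres M' s') : M = M' ∧ s = s' := by
  have hocc : occurrences M' = occurrences M := by
    rw [← occurrences_flipCentres hs', ← h, occurrences_flipCentres hs]
  have hM'eq : flipCentres M (symmDiff s s') = M' := by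
    rw [← flipCentres_flipCentres hs (hocc ▸ hs'), h, flipCentres_flipCentres_self]
  obtain rfl : s = s' := by
    by_contra hne
    refine not_solves_and_solves_flipCentres A
      (symmDiff_le (le_sup_of_le_right hs) (le_sup_of_le_right (hocc ▸ hs'))) ?_
      ⟨hM, hM'eq ▸ hM'⟩
    rw [Finset.nonempty_iff_ne_empty, Ne, ← Finset.bot_eq_empty, symmDiff_eq_bot]
    exact hne
  refine ⟨?_, rfl⟩
  rw [← flipCentres_flipCentres_self (M := M) (t := s), h, flipCentres_flipCentres_self]

end Flips

section Counting

variable {a b : ℕ} {p : ℝ} {M : Fin a × Fin b → Bool}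

lemma prod_comp_eq_of_card_filter_eq {ι R : Type*} [Fintype ι] [CommMonoid R] (f : Bool → R)
    {P Q : ι → Bool} (h : (Finset.univ.filter fun x => P x = true).card =
      (Finset.univ.filter fun x => Q x = true).card) :
    ∏ x, f (P x) = ∏ x, f (Q x) := by
  have key : ∀ P : ι → Bool, ∏ x, f (P x) = f true ^ (Finset.univ.filter fun x => P x = true).card *
      f false ^ (Fintype.card ι - (Finset.univ.filter fun x => P x = true).card) := fun P => by
    have hcompl := Finset.card_filter_add_card_filter_not (s := Finset.univ) (P · = true)
    rw [Finset.card_univ] at hcompl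
    rw [show Fintype.card ι - _ = (Finset.univ.filter fun x => ¬P x = true).card by omega,
      ← Finset.prod_const, ← Finset.prod_const, ← Finset.prod_ite]
    exact Finset.prod_congr rfl fun x _ => by cases P x <;> rfl
  rw [key P, key Q, h]

def mineWeight (p : ℝ) (M : Fin a × Fin b → Bool) : ℝ :=
  ∏ c, if M c = true then p else 1 - p

lemma mineWeight_nonneg (hp₀ : 0 ≤ p) (hp₁ : p ≤ 1) : 0 ≤ mineWeight p M :=
  Finset.prod_nonneg fun c _ => by split <;> linarith

lemma mineProb_eq_sum (E : Set (Fin a × Fin b → Bool)) [DecidablePred (· ∈ E)] :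
    mineProb a b p E = ∑ M ∈ Finset.univ.filter (· ∈ E), mineWeight p M := by
  rw [Finset.sum_filter]
  exact Finset.sum_congr rfl fun M _ => by split_ifs <;> rfl

lemma mineProb_nonneg (hp₀ : 0 ≤ p) (hp₁ : p ≤ 1) (E : Set (Fin a × Fin b → Bool)) :
    0 ≤ mineProb a b p E := by
  rw [mineProb_eq_sum]
  exact Finset.sum_nonneg fun M _ => mineWeight_nonneg hp₀ hp₁

/-- A flip changes `M` only inside one window, where `P1` and `P2` have equally many mines. -/
lemma mineWeight_flipCentres_singleton {o : ℕ × ℕ} (ho : o ∈ occurrences M) :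
    mineWeight p (flipCentres M {o}) = mineWeight p M := by
  obtain ⟨q, hq⟩ := mem_occurrences.1 ho
  have hq' := flipCentres_containsAt (Finset.singleton_subset_iff.2 ho) hq
  rw [if_pos (Finset.mem_singleton.2 rfl)] at hq'
  obtain ⟨hr, hs⟩ := hq.bounds
  let W := Finset.univ.map (shiftEmb hr hs)
  unfold mineWeight
  rw [← Finset.prod_mul_prod_compl W, ← Finset.prod_mul_prod_compl W (f := fun c => _)]
  congr 1
  · simp only [W, Finset.prod_map, hq.apply_shiftEmb, hq'.apply_shiftEmb]
    exact prod_comp_eq_of_card_filter_eq (if · = true then p else 1 - p) (card_pattern_not q)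
  · refine Finset.prod_congr rfl fun c hc => ?_
    rw [flipCentres_of_not_inCentre]
    intro o' ho' hc'
    rw [Finset.mem_singleton.1 ho'] at hc'
    unfold InCentre at hc'
    refine Finset.mem_compl.1 hc (Finset.mem_map.2 ⟨(⟨c.1 - o.1, by omega⟩, ⟨c.2 - o.2, by omega⟩),
      Finset.mem_univ _, ?_⟩)
    ext <;> simp only [shiftEmb_apply] <;> omega

lemma mineWeight_flipCentres {t : Finset (ℕ × ℕ)} (ht : t ⊆ occurrences M) :
    mineWeight p (flipCentres M t) = mineWeight p M := by
  induction t using Finset.induction_on with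
  | empty => rw [flipCentres_empty]
  | insert o t hot ih =>
    obtain ⟨ho, ht'⟩ := Finset.insert_subset_iff.1 ht
    have hins : symmDiff t {o} = insert o t := by
      ext x
      by_cases hx : x = o <;> simp [Finset.mem_symmDiff, hx, hot]
    rw [← hins, ← flipCentres_flipCentres ht' (Finset.singleton_subset_iff.2 ho),
      mineWeight_flipCentres_singleton ((occurrences_flipCentres ht').symm ▸ ho), ih ht']

lemma nsmul_sum_le_sum_of_injOn {α β R : Type*} [DecidableEq α] [AddCommMonoid R]
    [PartialOrder R] [IsOrderedAddMonoid R] {F B : Finset α} {S : α → Finset β}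
    {g : α → β → α} {w : α → R} {n : ℕ} (hcard : ∀ x ∈ F, (S x).card = n)
    (hmaps : ∀ x ∈ F, ∀ y ∈ S x, g x y ∈ B) (hw : ∀ x ∈ F, ∀ y ∈ S x, w (g x y) = w x)
    (hinj : Set.InjOn (fun z : (_ : α) × β => g z.1 z.2) (F.sigma S))
    (hB : ∀ x ∈ B, 0 ≤ w x) :
    n • ∑ x ∈ F, w x ≤ ∑ x ∈ B, w x :=
  calc n • ∑ x ∈ F, w x = ∑ x ∈ F, ∑ y ∈ S x, w (g x y) := by
        rw [Finset.smul_sum]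
        refine Finset.sum_congr rfl fun x hx => ?_
        rw [Finset.sum_congr rfl (hw x hx), Finset.sum_const, hcard x hx]
    _ = ∑ z ∈ F.sigma S, w (g z.1 z.2) := (Finset.sum_sigma F S fun z => w (g z.1 z.2)).symm
    _ = ∑ x ∈ (F.sigma S).image fun z => g z.1 z.2, w x := (Finset.sum_image hinj).symm
    _ ≤ ∑ x ∈ B, w x := Finset.sum_le_sum_of_subset_of_nonneg
        (Finset.image_subset_iff.2 fun z hz => hmaps z.1 (Finset.mem_sigma.1 hz).1 z.2
          (Finset.mem_sigma.1 hz).2)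
        fun x hx _ => hB x hx

theorem two_pow_mul_mineProb_solves_le (hp₀ : 0 ≤ p) (hp₁ : p ≤ 1) (k : ℕ)
    (A : Algorithm a b) :
    2 ^ k * mineProb a b p ({M | Solves A M} ∩ {M | k ≤ numOcc M P1 + numOcc M P2}) ≤
      mineProb a b p {M | k ≤ numOcc M P1 + numOcc M P2} := by
  have hT (M : Fin a × Fin b → Bool) :
      ∃ T, k ≤ (occurrences M).card → T ⊆ occurrences M ∧ T.card = k := by
    by_cases h : k ≤ (occurrences M).card
    · obtain ⟨T, hT, hTk⟩ := Finset.exists_subset_card_eq h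
      exact ⟨T, fun _ => ⟨hT, hTk⟩⟩
    · exact ⟨∅, fun h' => absurd h' h⟩
  choose T hT using hT
  simp only [mineProb_eq_sum, numOcc_add_numOcc]
  have key := nsmul_sum_le_sum_of_injOn (S := fun M => (T M).powerset) (g := flipCentres)
    (w := mineWeight p) (n := 2 ^ k)
    (F := Finset.univ.filter (· ∈ {M | Solves A M} ∩ {M | k ≤ (occurrences M).card}))
    (B := Finset.univ.filter (· ∈ {M | k ≤ (occurrences M).card}))
    (fun M hM => by
      simp only [Finset.mem_filter, Set.mem_inter_iff, Set.mem_ofPred_eq] at hM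
      rw [Finset.card_powerset, (hT M hM.2.2).2])
    (fun M hM s hs => by
      simp only [Finset.mem_filter, Set.mem_inter_iff, Set.mem_ofPred_eq, Finset.mem_powerset]
        at hM hs ⊢
      rw [occurrences_flipCentres (hs.trans (hT M hM.2.2).1)]
      exact ⟨Finset.mem_univ _, hM.2.2⟩)
    (fun M hM s hs => by
      simp only [Finset.mem_filter, Set.mem_inter_iff, Set.mem_ofPred_eq, Finset.mem_powerset]
        at hM hs
      exact mineWeight_flipCentres (hs.trans (hT M hM.2.2).1))
    ?_ (fun M _ => mineWeight_nonneg hp₀ hp₁)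
  · rwa [nsmul_eq_mul, Nat.cast_pow, Nat.cast_ofNat] at key
  rintro ⟨M, s⟩ hMs ⟨M', s'⟩ hM's (h : flipCentres M s = flipCentres M' s')
  simp only [Finset.mem_coe, Finset.mem_sigma, Finset.mem_filter, Set.mem_inter_iff,
    Set.mem_ofPred_eq, Finset.mem_powerset] at hMs hM's
  obtain ⟨⟨-, hM, hk⟩, hs⟩ := hMs
  obtain ⟨⟨-, hM', hk'⟩, hs'⟩ := hM's
  obtain ⟨rfl, rfl⟩ := eq_of_flipCentres_eq hM hM' (hs.trans (hT M hk).1)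
    (hs'.trans (hT M' hk').1) h
  rfl

end Counting

theorem statement_4_general
    (aN bN : ℕ → ℕ)
    (p : ℕ → ℝ) (hp0 : ∀ N, 0 ≤ p N) (hp1 : ∀ N, p N ≤ 1)
    (k : ℕ → ℕ) :
    ∃ err : ℕ → ℝ, Filter.Tendsto err Filter.atTop (nhds 0) ∧
      ∀ N, ∀ A : Algorithm (aN N) (bN N),
        mineProb (aN N) (bN N) (p N)
            ({M | Solves A M} ∩ {M | k N ≤ numOcc M P1 + numOcc M P2}) /
          mineProb (aN N) (bN N) (p N) {M | k N ≤ numOcc M P1 + numOcc M P2}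
        ≤ ((1 : ℝ) / 2) ^ (k N) + err N := by
  refine ⟨0, tendsto_const_nhds, fun N A => ?_⟩
  rw [Pi.zero_apply, add_zero]
  have key := two_pow_mul_mineProb_solves_le (hp0 N) (hp1 N) (k N) A
  rcases (mineProb_nonneg (hp0 N) (hp1 N) {M | k N ≤ numOcc M P1 + numOcc M P2}).eq_or_lt
    with h | h
  · rw [← h, div_zero]
    positivity
  · rw [div_le_iff₀ h, div_pow, one_pow, div_mul_eq_mul_div, one_mul, le_div_iff₀ (by positivity),
      mul_comm]
    exact key

/-- conditionally on `M_{n,p}` containing at least `k ≪ n` occurrences of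
`P1` and `P2` (counted together), any algorithm solves `M_{n,p}` with conditional
probability at most `2^(-k) + o(1)`. -/
theorem statement_4
    (aN bN : ℕ → ℕ)
    (ha : Filter.Tendsto aN Filter.atTop Filter.atTop)
    (hb : Filter.Tendsto bN Filter.atTop Filter.atTop)
    (ha0 : ∀ N, 0 < aN N) (hb0 : ∀ N, 0 < bN N)
    (p : ℕ → ℝ) (hp0 : ∀ N, 0 ≤ p N) (hp1 : ∀ N, p N ≤ 1)
    (k : ℕ → ℕ) (hkpos : ∀ N, 0 < k N)
    (hk : Filter.Tendsto (fun N => (k N : ℝ) / ((aN N * bN N : ℕ) : ℝ))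
      Filter.atTop (nhds 0)) :
    ∃ err : ℕ → ℝ, Filter.Tendsto err Filter.atTop (nhds 0) ∧
      ∀ N, ∀ A : Algorithm (aN N) (bN N),
        mineProb (aN N) (bN N) (p N)
            ({M | Solves A M} ∩ {M | k N ≤ numOcc M P1 + numOcc M P2}) /
          mineProb (aN N) (bN N) (p N) {M | k N ≤ numOcc M P1 + numOcc M P2}
        ≤ ((1 : ℝ) / 2) ^ (k N) + err N :=
  statement_4_general aN bN p hp0 hp1 k

end Minesweeper
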